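/- arXiv:2210.08387 — 8 statements merged into one kernel-verified Lean document; each statement's English description precedes it below -/
import Mathlib

section
/- For any full column rank matrix Y ∈ ℝ^{n×r} and any H in the horizontal space H_Y = {H : Yᵀ H = Hᵀ Y}, one has ‖Y Hᵀ + H Yᵀ‖_F ≥ √2 · σ_r(Y) · ‖H‖_F, where σ_r(Y) is the smallest singular value of Y. -/
open Matrix BigOperators

/-- Frobenius norm of a real matrix. -/
noncomputable def frobNorm {n r : ℕ} (A : Matrix (Fin n) (Fin r) ℝ) : ℝ :=
  Real.sqrt (∑ i, ∑ j, (A i j) ^ 2)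

/-- Smallest singular value of a real `n × r` matrix: the infimum of `‖Y x‖`
over Euclidean unit vectors `x`. -/
noncomputable def sigmaMin {n r : ℕ} (Y : Matrix (Fin n) (Fin r) ℝ) : ℝ :=
  sInf {c | ∃ x : Fin r → ℝ, (∑ j, (x j) ^ 2) = 1 ∧
    c = Real.sqrt (∑ i, (Y.mulVec x i) ^ 2)}

lemma sigmaMin_nonneg {n r : ℕ} (Y : Matrix (Fin n) (Fin r) ℝ) : 0 ≤ sigmaMin Y := by
  apply Real.sInf_nonneg
  rintro c ⟨x, hx, rfl⟩
  exact Real.sqrt_nonneg _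

lemma sigmaMin_key {n r : ℕ} (Y : Matrix (Fin n) (Fin r) ℝ) (v : Fin r → ℝ) :
    sigmaMin Y ^ 2 * ∑ j, (v j) ^ 2 ≤ ∑ i, (Y.mulVec v i) ^ 2 := by
  by_cases h : ∑ j, (v j) ^ 2 = 0
  · rw [h, mul_zero]; positivity
  · have ht : 0 < ∑ j, (v j) ^ 2 := lt_of_le_of_ne (by positivity) (Ne.symm h)
    set t := ∑ j, (v j) ^ 2 with hts
    have hs0 : 0 < Real.sqrt t := Real.sqrt_pos.mpr ht
    set s := Real.sqrt t with hs
    have hs2 : s ^ 2 = t := Real.sq_sqrt ht.le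
    have hunit : ∑ j, ((s⁻¹ • v) j) ^ 2 = 1 := by
      simp only [Pi.smul_apply, smul_eq_mul, mul_pow]
      rw [← Finset.mul_sum, ← hts, inv_pow, hs2, inv_mul_cancel₀ ht.ne']
    have hle : sigmaMin Y ≤ Real.sqrt (∑ i, (Y.mulVec (s⁻¹ • v) i) ^ 2) := by
      apply csInf_le
      · exact ⟨0, by rintro c ⟨x, hx, rfl⟩; exact Real.sqrt_nonneg _⟩
      · exact ⟨s⁻¹ • v, hunit, rfl⟩
    have hmv : ∀ i, Y.mulVec (s⁻¹ • v) i = s⁻¹ * Y.mulVec v i := by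
      intro i
      rw [Matrix.mulVec_smul]
      simp
    have hsum : ∑ i, (Y.mulVec (s⁻¹ • v) i) ^ 2 = s⁻¹ ^ 2 * ∑ i, (Y.mulVec v i) ^ 2 := by
      simp only [hmv, mul_pow, Finset.mul_sum]
    have hR : 0 ≤ ∑ i, (Y.mulVec v i) ^ 2 := by positivity
    have h2 : sigmaMin Y ^ 2 ≤ s⁻¹ ^ 2 * ∑ i, (Y.mulVec v i) ^ 2 := by
      have := pow_le_pow_left₀ (sigmaMin_nonneg Y) hle 2
      rwa [Real.sq_sqrt (by positivity), hsum] at this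
    have h3 : s⁻¹ ^ 2 * t = 1 := by rw [inv_pow, hs2]; exact inv_mul_cancel₀ ht.ne'
    calc sigmaMin Y ^ 2 * t ≤ (s⁻¹ ^ 2 * ∑ i, (Y.mulVec v i) ^ 2) * t :=
          mul_le_mul_of_nonneg_right h2 ht.le
      _ = (∑ i, (Y.mulVec v i) ^ 2) * (s⁻¹ ^ 2 * t) := by ring
      _ = ∑ i, (Y.mulVec v i) ^ 2 := by rw [h3, mul_one]

/-- For any full column rank `Y ∈ ℝ^{n×r}` and any `H` in the horizontal space
`H_Y = {H : Yᵀ H = Hᵀ Y}`, one has `‖Y Hᵀ + H Yᵀ‖_F ≥ √2 σ_r(Y) ‖H‖_F`. -/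
theorem horizontal_lower_bound {n r : ℕ} (Y H : Matrix (Fin n) (Fin r) ℝ)
    (hrank : Y.rank = r) (hH : Yᵀ * H = Hᵀ * Y) :
    frobNorm (Y * Hᵀ + H * Yᵀ) ≥ Real.sqrt 2 * sigmaMin Y * frobNorm H := by
  set σ := sigmaMin Y with hσdef
  have hσ0 : 0 ≤ σ := sigmaMin_nonneg Y
  set P : Fin n → Fin n → ℝ := fun i j => ∑ k, Y i k * H j k with hP
  -- entries of the sum matrix
  have hA : ∀ i j, (Y * Hᵀ + H * Yᵀ) i j = P i j + P j i := by
    intro i j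
    simp only [Matrix.add_apply, Matrix.mul_apply, Matrix.transpose_apply, hP]
    congr 1
    exact Finset.sum_congr rfl fun k _ => mul_comm _ _
  -- cross term is nonnegative
  have hsym : ∀ k l, (Yᵀ * H) k l = (Yᵀ * H) l k := by
    intro k l
    conv_lhs => rw [hH]
    simp [Matrix.mul_apply, Matrix.transpose_apply]
    exact Finset.sum_congr rfl fun i _ => mul_comm _ _
  have htr1 : ∑ i, ∑ j, P i j * P j i = trace ((Y * Hᵀ) * (Y * Hᵀ)) := by
    simp [Matrix.trace, Matrix.diag, Matrix.mul_apply, hP]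
  have htr2 : trace ((Y * Hᵀ) * (Y * Hᵀ)) = trace ((Yᵀ * H) * (Yᵀ * H)) := by
    have : (Y * Hᵀ) * (Y * Hᵀ) = Y * ((Hᵀ * Y) * Hᵀ) := by
      simp only [Matrix.mul_assoc]
    rw [this, Matrix.trace_mul_comm, ← hH, Matrix.mul_assoc, ← hH]
  have hcross : 0 ≤ ∑ i, ∑ j, P i j * P j i := by
    rw [htr1, htr2]
    set S := Yᵀ * H with hSdef
    have e : trace (S * S) = ∑ k, ∑ l, S k l * S l k := by
      simp only [Matrix.trace, Matrix.diag, Matrix.mul_apply]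
    rw [e]
    have e2 : ∀ k l, S k l * S l k = (S k l) ^ 2 := by
      intro k l; rw [← hsym k l]; ring
    simp only [e2]
    positivity
  -- square term bound
  have hPsq : σ ^ 2 * (∑ i, ∑ j, (H i j) ^ 2) ≤ ∑ i, ∑ j, (P i j) ^ 2 := by
    rw [Finset.sum_comm (s := Finset.univ) (t := Finset.univ) (f := fun i j => (P i j) ^ 2)]
    rw [Finset.mul_sum]
    apply Finset.sum_le_sum
    intro j _
    have := sigmaMin_key Y (fun k => H j k)
    have hm : ∀ i, Y.mulVec (fun k => H j k) i = P i j := by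
      intro i; simp [Matrix.mulVec, dotProduct, hP]
    simpa [hm] using this
  -- expansion
  have hexp : ∑ i, ∑ j, ((Y * Hᵀ + H * Yᵀ) i j) ^ 2
      = 2 * (∑ i, ∑ j, (P i j) ^ 2) + 2 * (∑ i, ∑ j, P i j * P j i) := by
    have e1 : ∀ i j, ((Y * Hᵀ + H * Yᵀ) i j) ^ 2
        = (P i j) ^ 2 + (P j i) ^ 2 + 2 * (P i j * P j i) := by
      intro i j; rw [hA]; ring
    simp only [e1, Finset.sum_add_distrib, ← Finset.mul_sum]
    have e2 : ∑ i : Fin n, ∑ j : Fin n, (P j i) ^ 2 = ∑ i, ∑ j, (P i j) ^ 2 :=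
      Finset.sum_comm
    rw [e2]; ring
  -- combine
  have hmain : 2 * σ ^ 2 * (∑ i, ∑ j, (H i j) ^ 2)
      ≤ ∑ i, ∑ j, ((Y * Hᵀ + H * Yᵀ) i j) ^ 2 := by
    rw [hexp]; nlinarith [hPsq, hcross]
  have hHnn : (0:ℝ) ≤ ∑ i, ∑ j, (H i j) ^ 2 := by positivity
  have : Real.sqrt 2 * σ * frobNorm H = Real.sqrt (2 * σ ^ 2 * (∑ i, ∑ j, (H i j) ^ 2)) := by
    rw [Real.sqrt_mul (by positivity), Real.sqrt_mul (by norm_num), Real.sqrt_sq hσ0]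
    rfl
  rw [ge_iff_le, this]
  exact Real.sqrt_le_sqrt hmain
end

section
/- For an invertible matrix Y ∈ ℝ^{n×n} and any H ∈ ℝ^{n×n} with Yᵀ H = Hᵀ Y, one has ‖Y Hᵀ + H Yᵀ‖_F ≥ 2 · σ_n(Y) · ‖H‖_F, and this bound is attained for some nonzero H. -/
open Matrix BigOperators

section Aux
variable {n : ℕ}

private lemma sum_sq_eq_zero_iff' (u : Fin n → ℝ) : (∑ j, u j ^ 2) = 0 ↔ u = 0 := by
  constructor
  · intro h
    funext j
    have := (Finset.sum_eq_zero_iff_of_nonneg (fun j _ => sq_nonneg (u j))).mp h j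
      (Finset.mem_univ j)
    exact pow_eq_zero_iff two_ne_zero |>.mp this
  · intro h; rw [h]; simp

private lemma sum_outer_sq' (a b : Fin n → ℝ) :
    ∑ i, ∑ j, (a i * b j) ^ 2 = (∑ i, a i ^ 2) * (∑ j, b j ^ 2) := by
  rw [Finset.sum_mul_sum]
  exact Finset.sum_congr rfl fun i _ => Finset.sum_congr rfl fun j _ => by ring

private lemma quad_eq' (Y : Matrix (Fin n) (Fin n) ℝ) (x : Fin n → ℝ) :
    ∑ i, (Y.mulVec x i) ^ 2 = x ⬝ᵥ (Yᵀ * Y).mulVec x := by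
  rw [← Matrix.mulVec_mulVec, Matrix.dotProduct_mulVec, Matrix.vecMul_transpose]
  simp [dotProduct, pow_two]

private lemma mulVec_ne_zero' {A : Matrix (Fin n) (Fin n) ℝ} (hA : IsUnit A.det)
    {x : Fin n → ℝ} (hx : x ≠ 0) : A.mulVec x ≠ 0 := by
  intro h
  apply hx
  have : A⁻¹.mulVec (A.mulVec x) = x := by
    rw [Matrix.mulVec_mulVec, Matrix.nonsing_inv_mul _ hA, Matrix.one_mulVec]
  rw [← this, h, Matrix.mulVec_zero]

private lemma rayleigh_min' {M : Matrix (Fin n) (Fin n) ℝ} (hM : M.IsHermitian) {lam : ℝ}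
    (hlam : ∀ i, lam ≤ hM.eigenvalues i) (x : Fin n → ℝ) :
    lam * (∑ j, x j ^ 2) ≤ x ⬝ᵥ M.mulVec x := by
  set b := hM.eigenvectorBasis with hb
  set x' : EuclideanSpace ℝ (Fin n) := WithLp.toLp 2 x with hx'
  have inner_eq : ∀ a c : EuclideanSpace ℝ (Fin n),
      (inner ℝ a c : ℝ) = (a : Fin n → ℝ) ⬝ᵥ (c : Fin n → ℝ) := by
    intro a c
    simp [PiLp.inner_apply, RCLike.inner_apply, dotProduct, mul_comm]
  have key : ∀ i, (inner ℝ (b i) (WithLp.toLp 2 (M.mulVec x) : EuclideanSpace ℝ (Fin n)) : ℝ)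
      = hM.eigenvalues i * (inner ℝ (b i) x' : ℝ) := by
    intro i
    rw [inner_eq, inner_eq]
    have h1 : ((b i : EuclideanSpace ℝ (Fin n)) : Fin n → ℝ) ⬝ᵥ M.mulVec x
        = (M.mulVec (b i)) ⬝ᵥ x := by
      have hsymm : Mᵀ = M := by
        ext i j
        have := congrFun (congrFun hM.eq i) j
        simpa [Matrix.conjTranspose_apply] using this
      rw [Matrix.dotProduct_mulVec, ← Matrix.mulVec_transpose, hsymm]
    have h2 : M.mulVec (b i) = hM.eigenvalues i • ((b i : EuclideanSpace ℝ (Fin n)) : Fin n → ℝ) :=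
      hM.mulVec_eigenvectorBasis i
    rw [h1, h2, smul_dotProduct]
    simp [hx']
  have expand : x ⬝ᵥ M.mulVec x = ∑ i, hM.eigenvalues i * (inner ℝ (b i) x' : ℝ) ^ 2 := by
    have h0 : x ⬝ᵥ M.mulVec x = (inner ℝ x' (WithLp.toLp 2 (M.mulVec x) : EuclideanSpace ℝ (Fin n)) : ℝ) := by
      rw [inner_eq]
    rw [h0, ← b.sum_inner_mul_inner x' (WithLp.toLp 2 (M.mulVec x) : EuclideanSpace ℝ (Fin n))]
    refine Finset.sum_congr rfl fun i _ => ?_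
    rw [key i, real_inner_comm x' (b i)]
    ring
  have norm_expand : (∑ j, x j ^ 2) = ∑ i, (inner ℝ (b i) x' : ℝ) ^ 2 := by
    have h0 : (∑ j, x j ^ 2) = (inner ℝ x' x' : ℝ) := by
      rw [inner_eq]; simp [hx', dotProduct, pow_two]
    rw [h0, ← b.sum_inner_mul_inner x' x']
    refine Finset.sum_congr rfl fun i _ => ?_
    rw [real_inner_comm x' (b i)]; ring
  rw [expand, norm_expand, Finset.mul_sum]
  refine Finset.sum_le_sum fun i _ => ?_
  exact mul_le_mul_of_nonneg_right (hlam i) (sq_nonneg _)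

/-- existence of unit eigenvector for minimal eigenvalue, with Rayleigh bound -/
private lemma exists_min_eig' (hn : 0 < n) {M : Matrix (Fin n) (Fin n) ℝ} (hM : M.IsHermitian) :
    ∃ lam : ℝ, ∃ v : Fin n → ℝ, (∑ j, v j ^ 2) = 1 ∧ M.mulVec v = lam • v ∧
      ∀ x : Fin n → ℝ, lam * (∑ j, x j ^ 2) ≤ x ⬝ᵥ M.mulVec x := by
  haveI : Nonempty (Fin n) := ⟨⟨0, hn⟩⟩
  obtain ⟨i₀, -, hi₀⟩ := Finset.exists_min_image Finset.univ hM.eigenvalues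
    ⟨⟨0, hn⟩, Finset.mem_univ _⟩
  refine ⟨hM.eigenvalues i₀, hM.eigenvectorBasis i₀, ?_, hM.mulVec_eigenvectorBasis i₀, ?_⟩
  · have h1 : ‖hM.eigenvectorBasis i₀‖ = 1 := hM.eigenvectorBasis.orthonormal.1 i₀
    have h2 : ‖hM.eigenvectorBasis i₀‖ ^ 2 = ∑ j, (hM.eigenvectorBasis i₀ j) ^ 2 := by
      rw [EuclideanSpace.norm_eq, Real.sq_sqrt (Finset.sum_nonneg fun j _ => sq_nonneg _)]
      simp [sq_abs]
    rw [← h2, h1, one_pow]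
  · exact rayleigh_min' hM fun i => hi₀ i (Finset.mem_univ i)

private lemma eig_transfer' (A : Matrix (Fin n) (Fin n) ℝ) (hA : IsUnit A.det)
    {lam mu : ℝ}
    (hR : ∀ x : Fin n → ℝ, lam * (∑ j, x j ^ 2) ≤ x ⬝ᵥ (Aᵀ * A).mulVec x)
    {w : Fin n → ℝ} (hw : (∑ j, w j ^ 2) = 1)
    (hmu : (A * Aᵀ).mulVec w = mu • w) : lam ≤ mu := by
  set u : Fin n → ℝ := Aᵀ.mulVec w with hu
  have hAt : IsUnit Aᵀ.det := by rwa [Matrix.det_transpose]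
  have hu0 : u ≠ 0 := by
    apply mulVec_ne_zero' hAt
    intro h; rw [h] at hw; simp at hw
  have hS : 0 < ∑ j, u j ^ 2 := by
    rcases (Finset.sum_nonneg fun j _ => sq_nonneg (u j)).lt_or_eq with h | h
    · exact h
    · exact absurd ((sum_sq_eq_zero_iff' u).mp h.symm) hu0
  have heig : (Aᵀ * A).mulVec u = mu • u := by
    rw [hu, Matrix.mulVec_mulVec, Matrix.mul_assoc, ← Matrix.mulVec_mulVec, hmu,
      Matrix.mulVec_smul]
  have h1 : lam * (∑ j, u j ^ 2) ≤ mu * (∑ j, u j ^ 2) := by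
    have h2 := hR u
    rw [heig] at h2
    calc lam * (∑ j, u j ^ 2) ≤ u ⬝ᵥ (mu • u) := h2
      _ = mu * (∑ j, u j ^ 2) := by
          simp only [dotProduct, Pi.smul_apply, smul_eq_mul, Finset.mul_sum]
          exact Finset.sum_congr rfl fun j _ => by ring
  exact le_of_mul_le_mul_right h1 hS

end Aux

/-- For invertible `Y ∈ ℝ^{n×n}` and any `H` with `Yᵀ H = Hᵀ Y`, one has
`‖Y Hᵀ + H Yᵀ‖_F ≥ 2 σ_n(Y) ‖H‖_F`, and the bound is attained for some nonzero `H`. -/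
theorem horizontal_lower_bound_square {n : ℕ} (hn : 0 < n) (Y : Matrix (Fin n) (Fin n) ℝ)
    (hY : IsUnit Y.det) :
    (∀ H : Matrix (Fin n) (Fin n) ℝ, Yᵀ * H = Hᵀ * Y →
      frobNorm (Y * Hᵀ + H * Yᵀ) ≥ 2 * sigmaMin Y * frobNorm H) ∧
    (∃ H : Matrix (Fin n) (Fin n) ℝ, H ≠ 0 ∧ Yᵀ * H = Hᵀ * Y ∧
      frobNorm (Y * Hᵀ + H * Yᵀ) = 2 * sigmaMin Y * frobNorm H) := by
  -- spectral data for M = YᵀY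
  have hM : (Yᵀ * Y).IsHermitian := Matrix.isHermitian_conjTranspose_mul_self Y
  obtain ⟨lam, v, hv1, hveig, hvR⟩ := exists_min_eig' hn hM
  have hN : (Y * Yᵀ).IsHermitian := by
    have h := Matrix.isHermitian_mul_conjTranspose_self Y
    rwa [Matrix.conjTranspose_eq_transpose_of_trivial] at h
  obtain ⟨mu, w, hw1, hweig, hwR⟩ := exists_min_eig' hn hN
  have hmulam : mu = lam := by
    have h1 : lam ≤ mu := eig_transfer' Y hY hvR hw1 hweig
    have h2 : mu ≤ lam := by
      refine eig_transfer' Yᵀ (by rwa [Matrix.det_transpose]) ?_ hv1 ?_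
      · intro x; rw [Matrix.transpose_transpose]; exact hwR x
      · rw [Matrix.transpose_transpose]; exact hveig
    exact le_antisymm h2 h1
  -- lam = ∑ (Yv)²
  have hvnz : v ≠ 0 := by
    intro h; rw [h] at hv1; simp at hv1
  have hlamY : ∑ i, (Y.mulVec v i) ^ 2 = lam := by
    rw [quad_eq', hveig]
    simp only [dotProduct, Pi.smul_apply, smul_eq_mul]
    calc ∑ i, v i * (lam * v i) = lam * ∑ j, v j ^ 2 := by
          rw [Finset.mul_sum]; exact Finset.sum_congr rfl fun j _ => by ring
      _ = lam := by rw [hv1, mul_one]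
  have hlam_pos : 0 < lam := by
    rcases (Finset.sum_nonneg fun i _ => sq_nonneg (Y.mulVec v i)).lt_or_eq with h | h
    · rwa [hlamY] at h
    · exact absurd ((sum_sq_eq_zero_iff' _).mp h.symm) (mulVec_ne_zero' hY hvnz)
  set sig : ℝ := Real.sqrt lam with hsqdef
  have hsq_pos : 0 < sig := Real.sqrt_pos.mpr hlam_pos
  have hsq_sq : sig * sig = lam := Real.mul_self_sqrt hlam_pos.le
  -- sigmaMin Y = sqrt lam
  have hmem : sig ∈ {c | ∃ x : Fin n → ℝ, (∑ j, (x j) ^ 2) = 1 ∧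
      c = Real.sqrt (∑ i, (Y.mulVec x i) ^ 2)} := ⟨v, hv1, by rw [hlamY]⟩
  have hlb : ∀ c ∈ {c | ∃ x : Fin n → ℝ, (∑ j, (x j) ^ 2) = 1 ∧
      c = Real.sqrt (∑ i, (Y.mulVec x i) ^ 2)}, sig ≤ c := by
    rintro c ⟨x, hx, rfl⟩
    apply Real.sqrt_le_sqrt
    have := hvR x
    rw [hx, mul_one] at this
    rw [quad_eq']
    exact this
  have hsqma : sigmaMin Y = sig := by
    rw [sigmaMin]
    exact le_antisymm (csInf_le ⟨sig, hlb⟩ hmem) (le_csInf ⟨sig, hmem⟩ hlb)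
  -- the two key quadratic lower bounds
  have key1 : ∀ H : Matrix (Fin n) (Fin n) ℝ,
      lam * (∑ i, ∑ j, (H i j) ^ 2) ≤ ∑ i, ∑ j, ((Y * Hᵀ) i j) ^ 2 := by
    intro H
    rw [Finset.sum_comm (s := Finset.univ) (t := Finset.univ)
      (f := fun i j => ((Y * Hᵀ) i j) ^ 2), Finset.mul_sum]
    refine Finset.sum_le_sum fun j _ => ?_
    have hcol : ∀ i, (Y * Hᵀ) i j = Y.mulVec (fun k => H j k) i := by
      intro i
      simp [Matrix.mul_apply, Matrix.mulVec, dotProduct, Matrix.transpose_apply]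
    calc lam * ∑ k, (H j k) ^ 2
        ≤ (fun k => H j k) ⬝ᵥ (Yᵀ * Y).mulVec (fun k => H j k) := hvR _
      _ = ∑ i, (Y.mulVec (fun k => H j k) i) ^ 2 := (quad_eq' Y _).symm
      _ = ∑ i, ((Y * Hᵀ) i j) ^ 2 := by
          exact Finset.sum_congr rfl fun i _ => by rw [hcol i]
  have key2 : ∀ H : Matrix (Fin n) (Fin n) ℝ,
      lam * (∑ i, ∑ j, (H i j) ^ 2) ≤ ∑ i, ∑ j, ((Hᵀ * Y) i j) ^ 2 := by
    intro H
    rw [Finset.sum_comm (s := Finset.univ) (t := Finset.univ)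
      (f := fun i j => (H i j) ^ 2), Finset.mul_sum]
    refine Finset.sum_le_sum fun i _ => ?_
    have hrow : ∀ j, (Hᵀ * Y) i j = Yᵀ.mulVec (fun k => H k i) j := by
      intro j
      simp [Matrix.mul_apply, Matrix.mulVec, dotProduct, Matrix.transpose_apply, mul_comm]
    have hwR' : mu * (∑ k, (H k i) ^ 2) ≤
        (fun k => H k i) ⬝ᵥ ((Yᵀ)ᵀ * Yᵀ).mulVec (fun k => H k i) := by
      rw [Matrix.transpose_transpose]; exact hwR _
    calc lam * ∑ k, (H k i) ^ 2
        ≤ (fun k => H k i) ⬝ᵥ ((Yᵀ)ᵀ * Yᵀ).mulVec (fun k => H k i) := by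
          rw [← hmulam]; exact hwR'
      _ = ∑ j, (Yᵀ.mulVec (fun k => H k i) j) ^ 2 := (quad_eq' Yᵀ _).symm
      _ = ∑ j, ((Hᵀ * Y) i j) ^ 2 := by
          exact Finset.sum_congr rfl fun j _ => by rw [hrow j]
  -- trace identity
  have traceid : ∀ P Q : Matrix (Fin n) (Fin n) ℝ,
      ∑ i, ∑ j, P i j * Q i j = Matrix.trace (P * Qᵀ) := by
    intro P Q
    rw [Matrix.trace]
    simp only [Matrix.diag_apply, Matrix.mul_apply, Matrix.transpose_apply]
  have cross : ∀ H : Matrix (Fin n) (Fin n) ℝ, Yᵀ * H = Hᵀ * Y →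
      ∑ i, ∑ j, (Y * Hᵀ) i j * (H * Yᵀ) i j = ∑ i, ∑ j, ((Hᵀ * Y) i j) ^ 2 := by
    intro H hH
    have h1 : ∑ i, ∑ j, (Y * Hᵀ) i j * (H * Yᵀ) i j
        = Matrix.trace ((Y * Hᵀ) * (Y * Hᵀ)) := by
      rw [traceid]
      congr 1
      rw [Matrix.transpose_mul, Matrix.transpose_transpose]
    have h2 : ∑ i, ∑ j, ((Hᵀ * Y) i j) ^ 2
        = Matrix.trace ((Hᵀ * Y) * (Hᵀ * Y)) := by
      simp only [pow_two]
      have t := traceid (Hᵀ * Y) (Hᵀ * Y)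
      rwa [Matrix.transpose_mul, Matrix.transpose_transpose, hH] at t
    rw [h1, h2]
    have h3 : (Y * Hᵀ) * (Y * Hᵀ) = Y * (Hᵀ * Y * Hᵀ) := by
      rw [Matrix.mul_assoc, Matrix.mul_assoc]
    have h4 : (Hᵀ * Y * Hᵀ) * Y = (Hᵀ * Y) * (Hᵀ * Y) := by
      rw [Matrix.mul_assoc]
    rw [h3, Matrix.trace_mul_comm, h4]
  -- transpose sum identity
  have transp : ∀ H : Matrix (Fin n) (Fin n) ℝ,
      ∑ i, ∑ j, ((H * Yᵀ) i j) ^ 2 = ∑ i, ∑ j, ((Y * Hᵀ) i j) ^ 2 := by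
    intro H
    rw [Finset.sum_comm]
    refine Finset.sum_congr rfl fun j _ => Finset.sum_congr rfl fun i _ => ?_
    congr 1
    simp [Matrix.mul_apply, Matrix.transpose_apply, mul_comm]
  -- total expansion
  have total : ∀ H : Matrix (Fin n) (Fin n) ℝ, Yᵀ * H = Hᵀ * Y →
      ∑ i, ∑ j, ((Y * Hᵀ + H * Yᵀ) i j) ^ 2
        = 2 * (∑ i, ∑ j, ((Y * Hᵀ) i j) ^ 2) + 2 * (∑ i, ∑ j, ((Hᵀ * Y) i j) ^ 2) := by
    intro H hH
    have e1 : ∑ i, ∑ j, ((Y * Hᵀ + H * Yᵀ) i j) ^ 2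
        = ∑ i, ∑ j, (((Y * Hᵀ) i j) ^ 2 + 2 * ((Y * Hᵀ) i j * (H * Yᵀ) i j)
            + ((H * Yᵀ) i j) ^ 2) := by
      refine Finset.sum_congr rfl fun i _ => Finset.sum_congr rfl fun j _ => ?_
      rw [Matrix.add_apply]; ring
    rw [e1]
    simp only [Finset.sum_add_distrib, ← Finset.mul_sum]
    rw [cross H hH, transp H]
    ring
  constructor
  · -- the lower bound
    intro H hH
    have hSH : (0:ℝ) ≤ ∑ i, ∑ j, (H i j) ^ 2 :=
      Finset.sum_nonneg fun i _ => Finset.sum_nonneg fun j _ => sq_nonneg _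
    have hbound : 4 * lam * (∑ i, ∑ j, (H i j) ^ 2)
        ≤ ∑ i, ∑ j, ((Y * Hᵀ + H * Yᵀ) i j) ^ 2 := by
      rw [total H hH]
      have := key1 H
      have := key2 H
      nlinarith [key1 H, key2 H]
    have hfrob : frobNorm (Y * Hᵀ + H * Yᵀ)
        ≥ Real.sqrt (4 * lam * (∑ i, ∑ j, (H i j) ^ 2)) := by
      rw [frobNorm]
      exact Real.sqrt_le_sqrt hbound
    have hsqrt4 : Real.sqrt (4 * lam * (∑ i, ∑ j, (H i j) ^ 2))
        = 2 * sig * frobNorm H := by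
      rw [frobNorm]
      rw [show 4 * lam * (∑ i, ∑ j, (H i j) ^ 2)
          = (2 * sig) ^ 2 * (∑ i, ∑ j, (H i j) ^ 2) by
        linear_combination (-(4 * (∑ i, ∑ j, (H i j) ^ 2))) * hsq_sq,
        Real.sqrt_mul (by positivity) _, Real.sqrt_sq (by positivity : (0:ℝ) ≤ 2 * sig)]
    rw [hsqma]
    rw [← hsqrt4]
    exact hfrob
  · -- attainment
    set u : Fin n → ℝ := sig⁻¹ • Y.mulVec v with hudef
    have hYv : Y.mulVec v = sig • u := by
      rw [hudef, smul_smul, mul_inv_cancel₀ hsq_pos.ne', one_smul]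
    have hu1 : ∑ i, u i ^ 2 = 1 := by
      have : ∑ i, u i ^ 2 = sig⁻¹ ^ 2 * ∑ i, (Y.mulVec v i) ^ 2 := by
        rw [Finset.mul_sum]
        exact Finset.sum_congr rfl fun i _ => by
          rw [hudef]; simp [Pi.smul_apply]; ring
      rw [this, hlamY, ← hsq_sq, pow_two]
      field_simp
    have hYtu : Yᵀ.mulVec u = sig • v := by
      rw [hudef, Matrix.mulVec_smul, Matrix.mulVec_mulVec, hveig, smul_smul]
      congr 1
      rw [← hsq_sq]
      field_simp
    refine ⟨Matrix.of (fun i j => u i * v j), ?_, ?_, ?_⟩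
    · intro h
      have h1 : ∑ i, ∑ j, (u i * v j) ^ 2 = 1 := by
        rw [sum_outer_sq', hu1, hv1, mul_one]
      have h2 : ∀ i j, u i * v j = 0 := by
        intro i j
        have := congrFun (congrFun h i) j
        simpa using this
      rw [Finset.sum_eq_zero (fun i _ => Finset.sum_eq_zero fun j _ => by
        rw [h2 i j]; ring)] at h1
      norm_num at h1
    · ext i j
      have hL : (Yᵀ * Matrix.of (fun i j => u i * v j)) i j = (Yᵀ.mulVec u) i * v j := by
        simp only [Matrix.mul_apply, Matrix.of_apply, Matrix.mulVec, dotProduct]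
        rw [Finset.sum_mul]
        exact Finset.sum_congr rfl fun k _ => by ring
      have hR : ((Matrix.of (fun i j => u i * v j))ᵀ * Y) i j = v i * (Yᵀ.mulVec u) j := by
        simp only [Matrix.mul_apply, Matrix.of_apply, Matrix.transpose_apply,
          Matrix.mulVec, dotProduct]
        rw [Finset.mul_sum]
        exact Finset.sum_congr rfl fun k _ => by ring
      rw [hL, hR, hYtu]
      simp [Pi.smul_apply]; ring
    · have heq : Y * (Matrix.of (fun i j => u i * v j))ᵀ
          + (Matrix.of (fun i j => u i * v j)) * Yᵀ
          = Matrix.of (fun i j => 2 * sig * (u i * u j)) := by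
        ext i j
        have hA : (Y * (Matrix.of (fun i j => u i * v j))ᵀ) i j = (Y.mulVec v) i * u j := by
          simp only [Matrix.mul_apply, Matrix.of_apply, Matrix.transpose_apply,
            Matrix.mulVec, dotProduct]
          rw [Finset.sum_mul]
          exact Finset.sum_congr rfl fun k _ => by ring
        have hB : ((Matrix.of (fun i j => u i * v j)) * Yᵀ) i j = u i * (Y.mulVec v) j := by
          simp only [Matrix.mul_apply, Matrix.of_apply, Matrix.transpose_apply,
            Matrix.mulVec, dotProduct]
          rw [Finset.mul_sum]
          exact Finset.sum_congr rfl fun k _ => by ring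
        rw [Matrix.add_apply, hA, hB, hYv]
        simp [Pi.smul_apply, Matrix.of_apply]; ring
      rw [heq, hsqma]
      have hF1 : frobNorm (Matrix.of (fun i j => 2 * sig * (u i * u j))) = 2 * sig := by
        rw [frobNorm]
        have : ∑ i, ∑ j, ((Matrix.of (fun i j => 2 * sig * (u i * u j)) : Matrix (Fin n) (Fin n) ℝ) i j) ^ 2
            = (2 * sig) ^ 2 * ((∑ i, u i ^ 2) * (∑ j, u j ^ 2)) := by
          rw [← sum_outer_sq' u u, Finset.mul_sum]
          refine Finset.sum_congr rfl fun i _ => ?_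
          rw [Finset.mul_sum]
          exact Finset.sum_congr rfl fun j _ => by simp [Matrix.of_apply]; ring
        rw [this, hu1, mul_one, mul_one, Real.sqrt_sq (by positivity)]
      have hF2 : frobNorm (Matrix.of (fun i j => u i * v j)) = 1 := by
        rw [frobNorm]
        have : ∑ i, ∑ j, ((Matrix.of (fun i j => u i * v j) : Matrix (Fin n) (Fin n) ℝ) i j) ^ 2
            = 1 := by
          rw [show ∑ i, ∑ j, ((Matrix.of (fun i j => u i * v j) : Matrix (Fin n) (Fin n) ℝ) i j) ^ 2
            = ∑ i, ∑ j, (u i * v j) ^ 2 from rfl, sum_outer_sq', hu1, hv1, mul_one]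
        rw [this, Real.sqrt_one]
      rw [hF1, hF2, mul_one]
end

section
/- Let φ : ℝ^{n×r} → S^n be the map φ(Y) = Y Yᵀ. If Y has full column rank, then the kernel of the derivative φ'(Y)[H] = Y Hᵀ + H Yᵀ equals the vertical space T_Y = {Y S : S skew-symmetric r×r}. -/
open Matrix BigOperators

/-- For `Y` of full column rank, the kernel of the derivative of `φ(Y) = Y Yᵀ`,
`H ↦ Y Hᵀ + H Yᵀ`, equals the vertical space `{Y S : S skew-symmetric}`. -/
theorem kernel_of_derivative_eq_vertical {n r : ℕ} (Y : Matrix (Fin n) (Fin r) ℝ)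
    (hrank : Y.rank = r) :
    {H : Matrix (Fin n) (Fin r) ℝ | Y * Hᵀ + H * Yᵀ = 0} =
      {H : Matrix (Fin n) (Fin r) ℝ |
        ∃ S : Matrix (Fin r) (Fin r) ℝ, Sᵀ = -S ∧ H = Y * S} := by
  have hA : IsUnit (Yᵀ * Y) := by
    rw [← Matrix.mulVec_injective_iff_isUnit]
    have hker : LinearMap.ker (Yᵀ * Y).mulVecLin = ⊥ := by
      rw [Matrix.ker_mulVecLin_transpose_mul_self]
      have h := LinearMap.finrank_range_add_finrank_ker Y.mulVecLin
      rw [show Module.finrank ℝ (LinearMap.range Y.mulVecLin) = r from hrank] at h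
      simp at h
      exact h
    exact fun x y hxy => LinearMap.ker_eq_bot.mp hker hxy
  have hdet : IsUnit (Yᵀ * Y).det := (Matrix.isUnit_iff_isUnit_det _).mp hA
  have hAinvT : (Yᵀ * Y)⁻¹ᵀ = (Yᵀ * Y)⁻¹ := by
    rw [Matrix.transpose_nonsing_inv,
      show (Yᵀ * Y)ᵀ = Yᵀ * Y by simp [Matrix.transpose_mul]]
  ext H
  simp only [Set.mem_setOf_eq]
  constructor
  · intro hH
    have h1 : Y * (Hᵀ * Y) + H * (Yᵀ * Y) = 0 := by
      have h := congrArg (· * Y) hH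
      simpa [Matrix.add_mul, Matrix.mul_assoc] using h
    have key : (Yᵀ * Y) * (Hᵀ * Y) + (Yᵀ * H) * (Yᵀ * Y) = 0 := by
      have h := congrArg (fun M => Yᵀ * M * Y) hH
      simpa [Matrix.mul_add, Matrix.add_mul, Matrix.mul_assoc] using h
    have h2 : (Yᵀ * Y)⁻¹ * ((Yᵀ * Y) * (Hᵀ * Y) + (Yᵀ * H) * (Yᵀ * Y)) * (Yᵀ * Y)⁻¹
        = 0 := by rw [key]; simp
    have h3 : Hᵀ * Y * (Yᵀ * Y)⁻¹ + (Yᵀ * Y)⁻¹ * (Yᵀ * H) = 0 := by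
      rw [Matrix.mul_add, Matrix.add_mul] at h2
      have hcl : ∀ B : Matrix (Fin r) (Fin r) ℝ,
          (Yᵀ * Y)⁻¹ * (Yᵀ * (Y * B)) = B := fun B => by
        rw [← Matrix.mul_assoc Yᵀ Y B, Matrix.nonsing_inv_mul_cancel_left _ _ hdet]
      simpa [Matrix.mul_assoc, hcl, Matrix.mul_nonsing_inv _ hdet,
        Matrix.nonsing_inv_mul _ hdet] using h2
    have h4 : Hᵀ * Y * (Yᵀ * Y)⁻¹ = -((Yᵀ * Y)⁻¹ * (Yᵀ * H)) :=
      eq_neg_of_add_eq_zero_left h3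
    refine ⟨-(Hᵀ * Y * (Yᵀ * Y)⁻¹), ?_, ?_⟩
    · rw [Matrix.transpose_neg, neg_neg, Matrix.transpose_mul, Matrix.transpose_mul,
        Matrix.transpose_transpose, hAinvT, h4]
    · have h5 : Y * (Hᵀ * Y) = -(H * (Yᵀ * Y)) := eq_neg_of_add_eq_zero_left h1
      rw [Matrix.mul_neg,
        show Y * (Hᵀ * Y * (Yᵀ * Y)⁻¹) = Y * (Hᵀ * Y) * (Yᵀ * Y)⁻¹ from
          (Matrix.mul_assoc _ _ _).symm,
        h5, Matrix.neg_mul, neg_neg, Matrix.mul_nonsing_inv_cancel_right _ _ hdet]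
  · rintro ⟨S, hS, rfl⟩
    rw [Matrix.transpose_mul, hS]
    simp [Matrix.neg_mul, Matrix.mul_neg, Matrix.mul_assoc]
end

section
/- Let Y ∈ ℝ^{n×r} have full column rank with smallest singular value σ_r(Y), and let H₁, H₂ be in the horizontal space H_Y with ‖H₁‖_F < σ_r(Y) and ‖H₂‖_F < σ_r(Y). If (Y+H₁)(Y+H₁)ᵀ = (Y+H₂)(Y+H₂)ᵀ then H₁ = H₂. -/
open Matrix BigOperators

/-- `σ_min(Y) ‖x‖ ≤ ‖Y x‖`. -/
lemma sigmaMin_mul_le {n r : ℕ} (Y : Matrix (Fin n) (Fin r) ℝ) (x : Fin r → ℝ) :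
    sigmaMin Y * Real.sqrt (∑ j, (x j) ^ 2) ≤ Real.sqrt (∑ i, (Y.mulVec x i) ^ 2) := by
  have hbdd : BddBelow {c | ∃ x : Fin r → ℝ, (∑ j, (x j) ^ 2) = 1 ∧
      c = Real.sqrt (∑ i, (Y.mulVec x i) ^ 2)} := by
    refine ⟨0, ?_⟩
    rintro c ⟨x, -, rfl⟩
    exact Real.sqrt_nonneg _
  by_cases hx : x = 0
  · subst hx
    simp
  · have hsum : 0 < ∑ j, (x j) ^ 2 := by
      have h1 : ∃ j, x j ≠ 0 := Function.ne_iff.mp hx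
      obtain ⟨j, hj⟩ := h1
      exact Finset.sum_pos' (fun i _ => sq_nonneg _)
        ⟨j, Finset.mem_univ j, by positivity⟩
    set t : ℝ := Real.sqrt (∑ j, (x j) ^ 2) with ht
    have htpos : 0 < t := Real.sqrt_pos.2 hsum
    have htsq : t ^ 2 = ∑ j, (x j) ^ 2 := Real.sq_sqrt hsum.le
    have hmemb : (∑ j, ((t⁻¹ • x) j) ^ 2) = 1 := by
      have : ∑ j, ((t⁻¹ • x) j) ^ 2 = t⁻¹ ^ 2 * ∑ j, (x j) ^ 2 := by
        rw [Finset.mul_sum]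
        refine Finset.sum_congr rfl fun j _ => ?_
        simp [Pi.smul_apply, mul_pow]
      rw [this, ← htsq]
      field_simp
    have hle : sigmaMin Y ≤ Real.sqrt (∑ i, (Y.mulVec (t⁻¹ • x) i) ^ 2) :=
      csInf_le hbdd ⟨t⁻¹ • x, hmemb, rfl⟩
    have hmv : ∀ i, Y.mulVec (t⁻¹ • x) i = t⁻¹ * Y.mulVec x i := by
      intro i
      rw [Matrix.mulVec_smul]
      rfl
    have hRHS : Real.sqrt (∑ i, (Y.mulVec (t⁻¹ • x) i) ^ 2)
        = t⁻¹ * Real.sqrt (∑ i, (Y.mulVec x i) ^ 2) := by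
      have h1 : ∑ i, (Y.mulVec (t⁻¹ • x) i) ^ 2 = t⁻¹ ^ 2 * ∑ i, (Y.mulVec x i) ^ 2 := by
        rw [Finset.mul_sum]
        refine Finset.sum_congr rfl fun i _ => ?_
        rw [hmv i, mul_pow]
      rw [h1, Real.sqrt_mul (sq_nonneg _), Real.sqrt_sq (by positivity)]
    rw [hRHS] at hle
    rw [← le_div_iff₀ htpos, div_eq_inv_mul]
    exact hle

/-- `‖H x‖² ≤ ‖H‖_F² ‖x‖²` (Cauchy–Schwarz row by row). -/
lemma mulVec_sq_sum_le {n r : ℕ} (H : Matrix (Fin n) (Fin r) ℝ) (x : Fin r → ℝ) :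
    ∑ i, (H.mulVec x i) ^ 2 ≤ (∑ i, ∑ j, (H i j) ^ 2) * ∑ j, (x j) ^ 2 := by
  rw [Finset.sum_mul]
  refine Finset.sum_le_sum fun i _ => ?_
  have : H.mulVec x i = ∑ j, H i j * x j := rfl
  rw [this]
  exact Finset.sum_mul_sq_le_sq_mul_sq _ _ _

/-- `‖H x‖ ≤ ‖H‖_F ‖x‖`. -/
lemma mulVec_norm_le {n r : ℕ} (H : Matrix (Fin n) (Fin r) ℝ) (x : Fin r → ℝ) :
    Real.sqrt (∑ i, (H.mulVec x i) ^ 2) ≤ frobNorm H * Real.sqrt (∑ j, (x j) ^ 2) := by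
  have h1 := mulVec_sq_sum_le H x
  calc Real.sqrt (∑ i, (H.mulVec x i) ^ 2)
      ≤ Real.sqrt ((∑ i, ∑ j, (H i j) ^ 2) * ∑ j, (x j) ^ 2) := Real.sqrt_le_sqrt h1
    _ = frobNorm H * Real.sqrt (∑ j, (x j) ^ 2) := by
        rw [Real.sqrt_mul (by positivity)]
        rfl

/-- `Yᵀ(Y+H)` is positive definite when `‖H‖_F < σ_min(Y)` and `YᵀH` is symmetric. -/
lemma posDef_aux {n r : ℕ} (Y H : Matrix (Fin n) (Fin r) ℝ)
    (hH : Yᵀ * H = Hᵀ * Y) (hn : frobNorm H < sigmaMin Y) (hσ : 0 < sigmaMin Y) :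
    (Yᵀ * (Y + H)).PosDef := by
  rw [Matrix.posDef_iff_dotProduct_mulVec]
  constructor
  · -- Hermitian
    rw [Matrix.IsHermitian, Matrix.conjTranspose_eq_transpose_of_trivial,
      Matrix.transpose_mul, Matrix.transpose_transpose, Matrix.transpose_add,
      Matrix.add_mul, Matrix.mul_add, ← hH]
  · intro x hx
    have hstar : star x = x := by
      funext i; simp
    rw [hstar]
    have hdp : x ⬝ᵥ ((Yᵀ * (Y + H)) *ᵥ x) = (Y *ᵥ x) ⬝ᵥ ((Y + H) *ᵥ x) := by
      rw [← Matrix.mulVec_mulVec, Matrix.dotProduct_mulVec, Matrix.vecMul_transpose]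
    rw [hdp, Matrix.add_mulVec]
    set a : Fin n → ℝ := Y *ᵥ x with ha
    set h : Fin n → ℝ := H *ᵥ x with hh
    have hsplit : a ⬝ᵥ (a + h) = (∑ i, (a i) ^ 2) + ∑ i, a i * h i := by
      simp only [dotProduct, Pi.add_apply, mul_add, Finset.sum_add_distrib, sq]
    rw [hsplit]
    set sa : ℝ := Real.sqrt (∑ i, (a i) ^ 2) with hsa
    set sh : ℝ := Real.sqrt (∑ i, (h i) ^ 2) with hsh
    set t : ℝ := Real.sqrt (∑ j, (x j) ^ 2) with htdef
    have htpos : 0 < t := by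
      apply Real.sqrt_pos.2
      obtain ⟨j, hj⟩ := Function.ne_iff.mp hx
      exact Finset.sum_pos' (fun i _ => sq_nonneg _)
        ⟨j, Finset.mem_univ j, pow_two_pos_of_ne_zero hj⟩
    have hsa_ge : sigmaMin Y * t ≤ sa := sigmaMin_mul_le Y x
    have hsh_le : sh ≤ frobNorm H * t := mulVec_norm_le H x
    have hsapos : 0 < sa := lt_of_lt_of_le (mul_pos hσ htpos) hsa_ge
    have hsasq : sa ^ 2 = ∑ i, (a i) ^ 2 := Real.sq_sqrt (by positivity)
    have hCS : -(sa * sh) ≤ ∑ i, a i * h i := by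
      have := Real.sum_mul_le_sqrt_mul_sqrt Finset.univ (fun i => -(a i)) h
      simp only [neg_sq, neg_mul, Finset.sum_neg_distrib] at this
      have h2 : -(∑ i, a i * h i) ≤ sa * sh := this
      linarith
    have hlt : sh < sa := by
      calc sh ≤ frobNorm H * t := hsh_le
        _ < sigmaMin Y * t := by
            exact mul_lt_mul_of_pos_right hn htpos
        _ ≤ sa := hsa_ge
    have hshnonneg : 0 ≤ sh := Real.sqrt_nonneg _
    nlinarith [mul_lt_mul_of_pos_left hlt hsapos]

/-- Injectivity of the Burer–Monteiro factorization on the horizontal ball: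
if `H₁, H₂ ∈ H_Y` with `‖Hᵢ‖_F < σ_r(Y)` and
`(Y+H₁)(Y+H₁)ᵀ = (Y+H₂)(Y+H₂)ᵀ`, then `H₁ = H₂`. -/
theorem horizontal_ball_injective {n r : ℕ} (Y H₁ H₂ : Matrix (Fin n) (Fin r) ℝ)
    (hrank : Y.rank = r)
    (hH₁ : Yᵀ * H₁ = H₁ᵀ * Y) (hH₂ : Yᵀ * H₂ = H₂ᵀ * Y)
    (hn₁ : frobNorm H₁ < sigmaMin Y) (hn₂ : frobNorm H₂ < sigmaMin Y)
    (heq : (Y + H₁) * (Y + H₁)ᵀ = (Y + H₂) * (Y + H₂)ᵀ) :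
    H₁ = H₂ := by
  have hσ : 0 < sigmaMin Y := lt_of_le_of_lt (Real.sqrt_nonneg _) hn₁
  set A : Matrix (Fin r) (Fin r) ℝ := Yᵀ * (Y + H₁) with hA
  set B : Matrix (Fin r) (Fin r) ℝ := Yᵀ * (Y + H₂) with hB
  have hApos : A.PosDef := posDef_aux Y H₁ hH₁ hn₁ hσ
  have hBpos : B.PosDef := posDef_aux Y H₂ hH₂ hn₂ hσ
  -- symmetry of A and B as transposes
  have hAsymm : Aᵀ = A := by
    have := hApos.1
    rwa [Matrix.IsHermitian, Matrix.conjTranspose_eq_transpose_of_trivial] at this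
  have hBsymm : Bᵀ = B := by
    have := hBpos.1
    rwa [Matrix.IsHermitian, Matrix.conjTranspose_eq_transpose_of_trivial] at this
  -- A² = B²
  have hAsq : A ^ 2 = Yᵀ * ((Y + H₁) * (Y + H₁)ᵀ) * Y := by
    calc A ^ 2 = A * Aᵀ := by rw [hAsymm, sq]
      _ = (Yᵀ * (Y + H₁)) * ((Y + H₁)ᵀ * Y) := by
          rw [hA, Matrix.transpose_mul, Matrix.transpose_transpose]
      _ = Yᵀ * ((Y + H₁) * (Y + H₁)ᵀ) * Y := by
          simp only [Matrix.mul_assoc]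
  have hBsq : B ^ 2 = Yᵀ * ((Y + H₂) * (Y + H₂)ᵀ) * Y := by
    calc B ^ 2 = B * Bᵀ := by rw [hBsymm, sq]
      _ = (Yᵀ * (Y + H₂)) * ((Y + H₂)ᵀ * Y) := by
          rw [hB, Matrix.transpose_mul, Matrix.transpose_transpose]
      _ = Yᵀ * ((Y + H₂) * (Y + H₂)ᵀ) * Y := by
          simp only [Matrix.mul_assoc]
  have hsq : A ^ 2 = B ^ 2 := by rw [hAsq, hBsq, heq]
  -- uniqueness of PSD square roots
  have hAB : A = B := by
    open MatrixOrder Matrix.Norms.L2Operator in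
    exact (CFC.sq_eq_sq_iff A B hApos.posSemidef.nonneg hBpos.posSemidef.nonneg).mp hsq
  -- cancel B
  have hBunit : IsUnit B := hBpos.isUnit
  have hkey : B * (Y + H₁)ᵀ = B * (Y + H₂)ᵀ := by
    calc B * (Y + H₁)ᵀ = A * (Y + H₁)ᵀ := by rw [hAB]
      _ = Yᵀ * ((Y + H₁) * (Y + H₁)ᵀ) := by rw [hA, Matrix.mul_assoc]
      _ = Yᵀ * ((Y + H₂) * (Y + H₂)ᵀ) := by rw [heq]
      _ = B * (Y + H₂)ᵀ := by rw [hB, Matrix.mul_assoc]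
  clear_value A B
  have hinv : B⁻¹ * B = 1 :=
    Matrix.nonsing_inv_mul B ((Matrix.isUnit_iff_isUnit_det B).mp hBunit)
  have h2 : (Y + H₁)ᵀ = (Y + H₂)ᵀ := by
    calc (Y + H₁)ᵀ = (B⁻¹ * B) * (Y + H₁)ᵀ := by rw [hinv, Matrix.one_mul]
      _ = B⁻¹ * (B * (Y + H₁)ᵀ) := by rw [Matrix.mul_assoc]
      _ = B⁻¹ * (B * (Y + H₂)ᵀ) := by rw [hkey]
      _ = (B⁻¹ * B) * (Y + H₂)ᵀ := by rw [Matrix.mul_assoc]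
      _ = (Y + H₂)ᵀ := by rw [hinv, Matrix.one_mul]
  have h3 : Y + H₁ = Y + H₂ := by
    have := congrArg Matrix.transpose h2
    rwa [Matrix.transpose_transpose, Matrix.transpose_transpose] at this
  exact add_left_cancel h3
end

section
/- Let Y ∈ ℝ^{n×r} with ‖H‖_F < σ_r(Y) and Yᵀ H = Hᵀ Y. Then the matrix YᵀY + YᵀH is symmetric positive definite. -/
open Matrix BigOperators

/-- If `Y` has full column rank, `H ∈ H_Y` and `‖H‖_F < σ_r(Y)`, then
`Yᵀ Y + Yᵀ H` is symmetric positive definite. -/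
theorem gram_plus_horizontal_posdef {n r : ℕ} (Y H : Matrix (Fin n) (Fin r) ℝ)
    (hrank : Y.rank = r) (hH : Yᵀ * H = Hᵀ * Y)
    (hnorm : frobNorm H < sigmaMin Y) :
    (Yᵀ * Y + Yᵀ * H).PosDef := by
  have hF0 : 0 ≤ frobNorm H := Real.sqrt_nonneg _
  have hσ : 0 < sigmaMin Y := lt_of_le_of_lt hF0 hnorm
  rw [Matrix.posDef_iff_dotProduct_mulVec]
  constructor
  · -- Hermitian
    have hsym : (Yᵀ * Y + Yᵀ * H)ᵀ = Yᵀ * Y + Yᵀ * H := by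
      rw [Matrix.transpose_add, Matrix.transpose_mul, Matrix.transpose_mul,
        Matrix.transpose_transpose, ← hH]
    unfold Matrix.IsHermitian
    ext i j
    simp only [Matrix.conjTranspose_apply, star_trivial]
    conv_lhs => rw [← hsym]
    rfl
  · intro x hx
    -- quadratic form
    set u : Fin n → ℝ := Y *ᵥ x with hu
    set w : Fin n → ℝ := H *ᵥ x with hw
    have key : ∀ (B : Matrix (Fin n) (Fin r) ℝ),
        star x ⬝ᵥ (Yᵀ * B) *ᵥ x = u ⬝ᵥ (B *ᵥ x) := by
      intro B
      rw [← Matrix.mulVec_mulVec, Matrix.dotProduct_mulVec, show star x = x from rfl,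
        Matrix.vecMul_transpose]
    have hquad : star x ⬝ᵥ (Yᵀ * Y + Yᵀ * H) *ᵥ x = u ⬝ᵥ u + u ⬝ᵥ w := by
      rw [Matrix.add_mulVec, dotProduct_add, key Y, key H]
    rw [hquad]
    set S : ℝ := ∑ j, (x j) ^ 2 with hSdef
    set A : ℝ := ∑ i, (u i) ^ 2 with hAdef
    set B : ℝ := ∑ i, (w i) ^ 2 with hBdef
    have hS : 0 < S := by
      obtain ⟨j, hj⟩ := Function.ne_iff.mp hx
      exact Finset.sum_pos' (fun i _ => sq_nonneg _)
        ⟨j, Finset.mem_univ j, (sq_nonneg _).lt_of_ne (Ne.symm (pow_ne_zero 2 hj))⟩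
    have hS0 : 0 ≤ S := hS.le
    have hsqS : 0 < Real.sqrt S := Real.sqrt_pos.mpr hS
    have hA0 : 0 ≤ A := Finset.sum_nonneg fun i _ => sq_nonneg _
    have hB0 : 0 ≤ B := Finset.sum_nonneg fun i _ => sq_nonneg _
    -- σ √S ≤ √A
    have hmem : Real.sqrt A / Real.sqrt S ∈ {c | ∃ y : Fin r → ℝ,
        (∑ j, (y j) ^ 2) = 1 ∧ c = Real.sqrt (∑ i, (Y.mulVec y i) ^ 2)} := by
      refine ⟨(Real.sqrt S)⁻¹ • x, ?_, ?_⟩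
      · simp only [Pi.smul_apply, smul_eq_mul, mul_pow, ← Finset.mul_sum, ← hSdef]
        rw [← Real.sqrt_inv, Real.sq_sqrt (by positivity)]
        field_simp
      · rw [Matrix.mulVec_smul]
        simp only [Pi.smul_apply, smul_eq_mul, mul_pow, ← Finset.mul_sum, ← hu, ← hAdef]
        rw [← Real.sqrt_inv, Real.sq_sqrt (by positivity), Real.sqrt_mul (by positivity),
          Real.sqrt_inv, div_eq_inv_mul]
    have hbdd : BddBelow {c | ∃ y : Fin r → ℝ,
        (∑ j, (y j) ^ 2) = 1 ∧ c = Real.sqrt (∑ i, (Y.mulVec y i) ^ 2)} := by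
      refine ⟨0, fun c hc => ?_⟩
      obtain ⟨y, _, rfl⟩ := hc
      exact Real.sqrt_nonneg _
    have hσA : sigmaMin Y * Real.sqrt S ≤ Real.sqrt A := by
      have := csInf_le hbdd hmem
      rw [sigmaMin] at *
      calc sInf _ * Real.sqrt S ≤ (Real.sqrt A / Real.sqrt S) * Real.sqrt S :=
            mul_le_mul_of_nonneg_right this hsqS.le
        _ = Real.sqrt A := by field_simp
    -- √B ≤ F √S
    have hBF : Real.sqrt B ≤ frobNorm H * Real.sqrt S := by
      have hB' : B ≤ (∑ i, ∑ j, (H i j) ^ 2) * S := by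
        rw [Finset.sum_mul]
        refine Finset.sum_le_sum fun i _ => ?_
        have := Finset.sum_mul_sq_le_sq_mul_sq Finset.univ (fun j => H i j) x
        simpa [hw, Matrix.mulVec, dotProduct] using this
      calc Real.sqrt B ≤ Real.sqrt ((∑ i, ∑ j, (H i j) ^ 2) * S) := Real.sqrt_le_sqrt hB'
        _ = frobNorm H * Real.sqrt S := by
            rw [Real.sqrt_mul (by positivity)]; rfl
    -- Cauchy–Schwarz: |C| ≤ √A √B
    have hCS : -(Real.sqrt A * Real.sqrt B) ≤ u ⬝ᵥ w := by
      have h2 : (u ⬝ᵥ w) ^ 2 ≤ A * B := by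
        simpa [dotProduct, hAdef, hBdef] using
          Finset.sum_mul_sq_le_sq_mul_sq Finset.univ u w
      have habs : |u ⬝ᵥ w| ≤ Real.sqrt A * Real.sqrt B := by
        rw [← Real.sqrt_sq_eq_abs, ← Real.sqrt_mul hA0]
        exact Real.sqrt_le_sqrt h2
      linarith [neg_abs_le (u ⬝ᵥ w)]
    have hAu : u ⬝ᵥ u = A := by simp [dotProduct, hAdef, pow_two]
    rw [hAu]
    have hA_eq : A = Real.sqrt A ^ 2 := (Real.sq_sqrt hA0).symm
    have hsA : 0 < Real.sqrt A := lt_of_lt_of_le (by positivity) hσA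
    nlinarith [mul_le_mul_of_nonneg_left hBF hsA.le,
      mul_le_mul_of_nonneg_right hσA hsqS.le,
      mul_pos hσ hsqS, mul_pos hsA hsqS]
end

section
/- Let Y, Z₁ ∈ ℝ^{n×r} be such that Yᵀ Z₁ is symmetric positive semidefinite. Then ‖Z₁ − Y‖_F ≤ ‖(Z₁Z₁ᵀ)^{1/2} − (YYᵀ)^{1/2}‖_F. -/
open Matrix BigOperators

/-- The positive semidefinite square root of a positive semidefinite matrix
(as defined in Mathlib of December 2024, since removed). -/
noncomputable def Matrix.PosSemidef.sqrt {n 𝕜 : Type*} [Fintype n] [RCLike 𝕜] [PartialOrder 𝕜]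
    [StarOrderedRing 𝕜] [DecidableEq n]
    {A : Matrix n n 𝕜} (hA : A.PosSemidef) : Matrix n n 𝕜 :=
  hA.1.eigenvectorUnitary.1 * diagonal ((↑) ∘ (√·) ∘ hA.1.eigenvalues) *
  (star hA.1.eigenvectorUnitary : Matrix n n 𝕜)

section PortSqrt

open scoped MatrixOrder

lemma Matrix.PosSemidef.sqrt_eq_cfcSqrt {m : ℕ} {A : Matrix (Fin m) (Fin m) ℝ}
    (hA : A.PosSemidef) : hA.sqrt = CFC.sqrt A := by
  rw [CFC.sqrt_eq_real_sqrt A hA.nonneg,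
    cfcₙ_eq_cfc (f := Real.sqrt) (a := A) Real.continuous_sqrt.continuousOn Real.sqrt_zero,
    hA.1.cfc_eq]
  rfl

lemma Matrix.PosSemidef.posSemidef_sqrt {m : ℕ} {A : Matrix (Fin m) (Fin m) ℝ}
    (hA : A.PosSemidef) : hA.sqrt.PosSemidef := by
  rw [hA.sqrt_eq_cfcSqrt]; exact (CFC.sqrt_nonneg A).posSemidef

lemma Matrix.PosSemidef.sqrt_mul_self {m : ℕ} {A : Matrix (Fin m) (Fin m) ℝ}
    (hA : A.PosSemidef) : hA.sqrt * hA.sqrt = A := by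
  rw [hA.sqrt_eq_cfcSqrt]; exact CFC.sqrt_mul_sqrt_self A hA.nonneg

lemma Matrix.PosSemidef.sq_sqrt {m : ℕ} {A : Matrix (Fin m) (Fin m) ℝ}
    (hA : A.PosSemidef) : hA.sqrt ^ 2 = A := by
  rw [hA.sqrt_eq_cfcSqrt]; exact CFC.sq_sqrt A hA.nonneg

lemma Matrix.PosSemidef.eq_of_sq_eq_sq {m : ℕ} {A B : Matrix (Fin m) (Fin m) ℝ}
    (hA : A.PosSemidef) (hB : B.PosSemidef) (h : A ^ 2 = B ^ 2) : A = B :=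
  calc A = CFC.sqrt (A ^ 2) := (CFC.sqrt_sq A hA.nonneg).symm
    _ = CFC.sqrt (B ^ 2) := by rw [h]
    _ = B := CFC.sqrt_sq B hB.nonneg

lemma Matrix.PosSemidef.eq_sqrt_of_sq_eq {m : ℕ} {A B : Matrix (Fin m) (Fin m) ℝ}
    (hB : B.PosSemidef) (hA : A.PosSemidef) (h : B ^ 2 = A) : B = hA.sqrt := by
  rw [hA.sqrt_eq_cfcSqrt, ← h, CFC.sqrt_sq B hB.nonneg]

end PortSqrt

/- ### Auxiliary lemmas -/

private lemma star_eq_transpose' {k l : ℕ} (M : Matrix (Fin k) (Fin l) ℝ) : Mᴴ = Mᵀ :=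
  Matrix.conjTranspose_eq_transpose_of_trivial M

private lemma star_sq_eq_transpose {k : ℕ} (M : Matrix (Fin k) (Fin k) ℝ) : star M = Mᵀ := by
  rw [Matrix.star_eq_conjTranspose, star_eq_transpose']

/-- The trace of the PSD square root equals the sum of square roots of eigenvalues. -/
private lemma trace_psd_sqrt {m : ℕ} {Q : Matrix (Fin m) (Fin m) ℝ} (hQ : Q.PosSemidef) :
    hQ.sqrt.trace = ∑ j, Real.sqrt (hQ.1.eigenvalues j) := by
  have hU : (star hQ.1.eigenvectorUnitary.1 : Matrix (Fin m) (Fin m) ℝ)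
      * hQ.1.eigenvectorUnitary.1 = 1 := Matrix.UnitaryGroup.star_mul_self _
  rw [Matrix.PosSemidef.sqrt, Matrix.trace_mul_comm, ← Matrix.mul_assoc, hU, Matrix.one_mul,
    Matrix.trace_diagonal]
  rfl

/-- `tr M ≤ tr √(MᵀM)` for a square real matrix `M`. -/
private lemma trace_le_trace_sqrt {m : ℕ} (M : Matrix (Fin m) (Fin m) ℝ)
    (hQ : (Mᵀ * M).PosSemidef) : M.trace ≤ hQ.sqrt.trace := by
  set U : Matrix (Fin m) (Fin m) ℝ := hQ.1.eigenvectorUnitary.1 with hUdef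
  have hU1 : star U * U = 1 := Matrix.UnitaryGroup.star_mul_self _
  have hU2 : U * star U = 1 := Matrix.mem_unitaryGroup_iff.mp hQ.1.eigenvectorUnitary.2
  have hdiag : star U * (Mᵀ * M) * U = diagonal (fun j => hQ.1.eigenvalues j) := by
    have := hQ.1.conjStarAlgAut_star_eigenvectorUnitary
    rw [Unitary.conjStarAlgAut_star_apply] at this
    simpa using this
  have htr : M.trace = (star U * M * U).trace := by
    rw [Matrix.trace_mul_cycle, hU2, Matrix.one_mul]
  have hMU : (M * U)ᵀ * (M * U) = diagonal (fun j => hQ.1.eigenvalues j) := by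
    calc (M * U)ᵀ * (M * U) = star U * (Mᵀ * M) * U := by
          rw [Matrix.transpose_mul, star_sq_eq_transpose U]
          simp only [Matrix.mul_assoc]
      _ = diagonal (fun j => hQ.1.eigenvalues j) := hdiag
  rw [htr, trace_psd_sqrt hQ, Matrix.trace]
  apply Finset.sum_le_sum
  intro i _
  have hsq : ∑ j, ((M * U) j i) ^ 2 = hQ.1.eigenvalues i := by
    have h := congrFun (congrFun hMU i) i
    rw [Matrix.mul_apply] at h
    simp only [Matrix.transpose_apply, Matrix.diagonal_apply_eq] at h
    rw [← h]
    exact Finset.sum_congr rfl fun j _ => by rw [sq]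
  have hone : ∑ j, (U j i) ^ 2 = 1 := by
    have h := congrFun (congrFun hU1 i) i
    rw [star_sq_eq_transpose U, Matrix.mul_apply] at h
    simp only [Matrix.one_apply_eq] at h
    rw [← h]
    refine Finset.sum_congr rfl fun j _ => ?_
    rw [Matrix.transpose_apply, sq]
  have hentry : (star U * M * U).diag i = ∑ j, U j i * (M * U) j i := by
    rw [Matrix.diag, Matrix.mul_assoc, Matrix.mul_apply, star_sq_eq_transpose U]
    refine Finset.sum_congr rfl fun j _ => ?_
    rw [Matrix.transpose_apply]
  rw [hentry]
  calc ∑ j, U j i * (M * U) j i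
      ≤ Real.sqrt (∑ j, (U j i) ^ 2) * Real.sqrt (∑ j, ((M * U) j i) ^ 2) :=
        Real.sum_mul_le_sqrt_mul_sqrt _ _ _
    _ = Real.sqrt (hQ.1.eigenvalues i) := by
        rw [hone, hsq, Real.sqrt_one, one_mul]

/-- If `WᵀW` is the diagonal matrix with entries `e`, then `tr √(WWᵀ) = ∑ √(e j)`. -/
private lemma trace_sqrt_mul_transpose {m r : ℕ} (W : Matrix (Fin m) (Fin r) ℝ) (e : Fin r → ℝ)
    (hW : Wᵀ * W = diagonal e) (h1 : (W * Wᵀ).PosSemidef) :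
    h1.sqrt.trace = ∑ j, Real.sqrt (e j) := by
  have hcol : ∀ j, (∑ i, (W i j) ^ 2) = e j := by
    intro j
    have h := congrFun (congrFun hW j) j
    rw [Matrix.mul_apply] at h
    simp only [Matrix.transpose_apply, Matrix.diagonal_apply_eq] at h
    rw [← h]
    exact Finset.sum_congr rfl fun i _ => by rw [sq]
  have he : ∀ j, 0 ≤ e j := fun j => (hcol j) ▸ Finset.sum_nonneg fun i _ => sq_nonneg _
  set c : Fin r → ℝ := fun j => if e j = 0 then 0 else (Real.sqrt (e j))⁻¹ with hc
  have hcnonneg : ∀ j, 0 ≤ c j := by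
    intro j; by_cases h : e j = 0 <;> simp [hc, h, Real.sqrt_nonneg, inv_nonneg]
  set S : Matrix (Fin m) (Fin m) ℝ := W * diagonal c * Wᵀ with hS
  -- columns of W with e j = 0 vanish
  have hWzero : ∀ i j, e j = 0 → W i j = 0 := by
    intro i j hj
    have : ∑ i, (W i j) ^ 2 = 0 := (hcol j).trans hj
    have := (Finset.sum_eq_zero_iff_of_nonneg (fun i _ => sq_nonneg (W i j))).1 this i
      (Finset.mem_univ i)
    exact pow_eq_zero_iff (two_ne_zero) |>.1 this
  -- S is PSD
  have hSpsd : S.PosSemidef := by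
    have key : S = (W * diagonal (fun j => Real.sqrt (c j)))
        * (W * diagonal (fun j => Real.sqrt (c j)))ᴴ := by
      rw [star_eq_transpose', Matrix.transpose_mul, Matrix.diagonal_transpose, hS]
      simp only [Matrix.mul_assoc]
      congr 1
      rw [← Matrix.mul_assoc, Matrix.diagonal_mul_diagonal]
      congr 1
      exact congrArg diagonal (funext fun j => (Real.mul_self_sqrt (hcnonneg j)).symm)
    rw [key]
    exact Matrix.posSemidef_self_mul_conjTranspose _
  -- S squares to W * Wᵀ
  have hS2 : S ^ 2 = W * Wᵀ := by
    have hmid : Wᵀ * (W * diagonal c) = diagonal (fun j => e j * c j) := by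
      rw [← Matrix.mul_assoc, hW, Matrix.diagonal_mul_diagonal]
    have hWd : W * diagonal (fun j => c j * (e j * c j)) = W := by
      have hfun : ∀ j, c j * (e j * c j) = 1 - (if e j = 0 then (1:ℝ) else 0) := by
        intro j
        by_cases h : e j = 0
        · simp [hc, h]
        · have h0 : 0 < e j := lt_of_le_of_ne (he j) (Ne.symm h)
          have hsq : Real.sqrt (e j) ≠ 0 := ne_of_gt (Real.sqrt_pos.mpr h0)
          have hee : Real.sqrt (e j) * Real.sqrt (e j) = e j := Real.mul_self_sqrt (he j)
          simp only [hc, h, if_false, sub_zero]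
          rw [← hee]
          field_simp
          rw [Real.sq_sqrt (he j), Real.sq_sqrt (he j)]
      have : diagonal (fun j => c j * (e j * c j))
          = 1 - diagonal (fun j => if e j = 0 then (1:ℝ) else 0) := by
        rw [← Matrix.diagonal_one, Matrix.diagonal_sub]
        exact congrArg diagonal (funext fun j => hfun j)
      rw [this, Matrix.mul_sub, Matrix.mul_one]
      have hz : W * diagonal (fun j => if e j = 0 then (1:ℝ) else 0) = 0 := by
        ext i j
        rw [Matrix.mul_apply]
        by_cases h : e j = 0
        · refine Finset.sum_eq_zero fun k _ => ?_
          rcases eq_or_ne k j with rfl | hk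
          · rw [hWzero i k h, zero_mul]
          · rw [Matrix.diagonal_apply_ne _ hk, mul_zero]
        · refine (Finset.sum_eq_zero fun k _ => ?_).trans rfl
          rcases eq_or_ne k j with rfl | hk
          · simp [Matrix.diagonal_apply_eq, h]
          · rw [Matrix.diagonal_apply_ne _ hk, mul_zero]
      rw [hz, sub_zero]
    calc S ^ 2 = W * diagonal c * (Wᵀ * (W * diagonal c)) * Wᵀ := by
          rw [pow_two, hS]; simp only [Matrix.mul_assoc]
      _ = W * (diagonal c * diagonal (fun j => e j * c j)) * Wᵀ := by
          rw [hmid]; simp only [Matrix.mul_assoc]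
      _ = W * diagonal (fun j => c j * (e j * c j)) * Wᵀ := by
          rw [Matrix.diagonal_mul_diagonal]
      _ = W * Wᵀ := by rw [hWd]
  have hSsqrt : S = h1.sqrt := hSpsd.eq_sqrt_of_sq_eq h1 hS2
  rw [← hSsqrt, hS, Matrix.trace_mul_cycle, hW,
    Matrix.diagonal_mul_diagonal, Matrix.trace_diagonal]
  refine Finset.sum_congr rfl fun j _ => ?_
  by_cases h : e j = 0
  · simp [hc, h]
  · have h0 : 0 < e j := lt_of_le_of_ne (he j) (Ne.symm h)
    have hsq : Real.sqrt (e j) ≠ 0 := ne_of_gt (Real.sqrt_pos.mpr h0)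
    have : e j * (Real.sqrt (e j))⁻¹ = Real.sqrt (e j) := by
      field_simp
      rw [Real.sq_sqrt (he j)]
    simp [hc, h, this]

/-- Key trace inequality: `tr(√(YYᵀ) √(ZZᵀ)) ≤ tr (Yᵀ Z)` when `YᵀZ` is PSD. -/
private lemma trace_sqrt_mul_sqrt_le {n r : ℕ} (Y Z₁ : Matrix (Fin n) (Fin r) ℝ)
    (hYZ : (Yᵀ * Z₁).PosSemidef)
    (hZZ : (Z₁ * Z₁ᵀ).PosSemidef) (hYY : (Y * Yᵀ).PosSemidef) :
    (hYY.sqrt * hZZ.sqrt).trace ≤ (Yᵀ * Z₁).trace := by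
  set A := hYY.sqrt with hAdef
  set B := hZZ.sqrt with hBdef
  have hA : A.PosSemidef := hYY.posSemidef_sqrt
  have hB : B.PosSemidef := hZZ.posSemidef_sqrt
  have hAt : Aᵀ = A := by rw [← star_eq_transpose' A]; exact hA.1
  have hBt : Bᵀ = B := by rw [← star_eq_transpose' B]; exact hB.1

  have hAA : A * A = Y * Yᵀ := hYY.sqrt_mul_self
  have hBB : B * B = Z₁ * Z₁ᵀ := hZZ.sqrt_mul_self
  set N : Matrix (Fin n) (Fin r) ℝ := B * Y with hNdef
  have hNt : Nᵀ = Yᵀ * B := by rw [hNdef, Matrix.transpose_mul, hBt]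
  have hQ : ((A * B)ᵀ * (A * B)).PosSemidef := by
    have := Matrix.posSemidef_conjTranspose_mul_self (A * B)
    rwa [star_eq_transpose'] at this
  have step1 : (A * B).trace ≤ hQ.sqrt.trace := trace_le_trace_sqrt _ hQ
  have hMN : (A * B)ᵀ * (A * B) = N * Nᵀ := by
    rw [Matrix.transpose_mul, hAt, hBt, hNdef, hNt]
    calc B * A * (A * B) = B * (A * A) * B := by simp only [Matrix.mul_assoc]
      _ = B * (Y * Yᵀ) * B := by rw [hAA]
      _ = B * Y * (Yᵀ * B) := by simp only [Matrix.mul_assoc]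
  have hNNt : (N * Nᵀ).PosSemidef := hMN ▸ hQ
  have hsqrteq : hQ.sqrt = hNNt.sqrt :=
    hQ.posSemidef_sqrt.eq_of_sq_eq_sq hNNt.posSemidef_sqrt
      (by rw [hQ.sq_sqrt, hNNt.sq_sqrt, hMN])
  -- eigen-decompose NᵀN
  have hNtN : (Nᵀ * N).PosSemidef := by
    have := Matrix.posSemidef_conjTranspose_mul_self N
    rwa [star_eq_transpose'] at this
  set V : Matrix (Fin r) (Fin r) ℝ := hNtN.1.eigenvectorUnitary.1 with hVdef
  set e : Fin r → ℝ := hNtN.1.eigenvalues with hedef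
  have hVV : V * star V = 1 := Matrix.mem_unitaryGroup_iff.mp hNtN.1.eigenvectorUnitary.2
  set W : Matrix (Fin n) (Fin r) ℝ := N * V with hWdef
  have hWtW : Wᵀ * W = diagonal e := by
    have hd := hNtN.1.conjStarAlgAut_star_eigenvectorUnitary
    rw [Unitary.conjStarAlgAut_star_apply] at hd
    rw [hWdef, Matrix.transpose_mul]
    calc Vᵀ * Nᵀ * (N * V) = star V * (Nᵀ * N) * V := by
          rw [star_sq_eq_transpose V]; simp only [Matrix.mul_assoc]
      _ = diagonal e := by rw [hd]; simp [hedef]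
  have hWWt : W * Wᵀ = N * Nᵀ := by
    rw [hWdef, Matrix.transpose_mul]
    calc N * V * (Vᵀ * Nᵀ) = N * (V * star V) * Nᵀ := by
          rw [star_sq_eq_transpose V]; simp only [Matrix.mul_assoc]
      _ = N * Nᵀ := by rw [hVV, Matrix.mul_one]
  have hWWtP : (W * Wᵀ).PosSemidef := hWWt.symm ▸ hNNt
  have hsqrteq2 : hNNt.sqrt = hWWtP.sqrt :=
    hNNt.posSemidef_sqrt.eq_of_sq_eq_sq hWWtP.posSemidef_sqrt
      (by rw [hNNt.sq_sqrt, hWWtP.sq_sqrt, hWWt])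
  have step2 : hWWtP.sqrt.trace = ∑ j, Real.sqrt (e j) :=
    trace_sqrt_mul_transpose W e hWtW hWWtP
  -- the other side: YᵀZ₁ = √(NᵀN)
  have hYZsq : (Yᵀ * Z₁) ^ 2 = Nᵀ * N := by
    have hZY : Z₁ᵀ * Y = Yᵀ * Z₁ := by
      have hh : (Yᵀ * Z₁)ᴴ = Yᵀ * Z₁ := hYZ.1
      rw [star_eq_transpose'] at hh
      rw [← hh, Matrix.transpose_mul, Matrix.transpose_transpose]
    calc (Yᵀ * Z₁) ^ 2 = Yᵀ * Z₁ * (Yᵀ * Z₁) := by rw [pow_two]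
      _ = Yᵀ * Z₁ * (Z₁ᵀ * Y) := by rw [hZY]
      _ = Yᵀ * (Z₁ * Z₁ᵀ) * Y := by simp only [Matrix.mul_assoc]
      _ = Yᵀ * (B * B) * Y := by rw [hBB]
      _ = Yᵀ * B * (B * Y) := by simp only [Matrix.mul_assoc]
      _ = Nᵀ * N := by rw [hNt, hNdef]
  have hYZsqrt : Yᵀ * Z₁ = hNtN.sqrt := hYZ.eq_sqrt_of_sq_eq hNtN hYZsq
  have step3 : (Yᵀ * Z₁).trace = ∑ j, Real.sqrt (e j) := by
    rw [hYZsqrt, trace_psd_sqrt hNtN]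
  calc (A * B).trace ≤ hQ.sqrt.trace := step1
    _ = hWWtP.sqrt.trace := by rw [hsqrteq, hsqrteq2]
    _ = ∑ j, Real.sqrt (e j) := step2
    _ = (Yᵀ * Z₁).trace := step3.symm

private lemma frobNorm_eq_sqrt_trace {n r : ℕ} (X : Matrix (Fin n) (Fin r) ℝ) :
    frobNorm X = Real.sqrt ((Xᵀ * X).trace) := by
  unfold frobNorm
  congr 1
  have h : (Xᵀ * X).trace = ∑ j, ∑ i, (X i j) ^ 2 := by
    rw [Matrix.trace]
    refine Finset.sum_congr rfl fun j _ => ?_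
    rw [Matrix.diag, Matrix.mul_apply]
    exact Finset.sum_congr rfl fun i _ => by rw [Matrix.transpose_apply, sq]
  rw [h, Finset.sum_comm]

/-- If `Yᵀ Z₁` is symmetric positive semidefinite, then
`‖Z₁ − Y‖_F ≤ ‖(Z₁Z₁ᵀ)^{1/2} − (YYᵀ)^{1/2}‖_F`. -/
theorem dist_le_dist_of_sqrt {n r : ℕ} (Y Z₁ : Matrix (Fin n) (Fin r) ℝ)
    (hYZ : (Yᵀ * Z₁).PosSemidef)
    (hZZ : (Z₁ * Z₁ᵀ).PosSemidef) (hYY : (Y * Yᵀ).PosSemidef) :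
    frobNorm (Z₁ - Y) ≤ frobNorm (hZZ.sqrt - hYY.sqrt) := by
  set A := hYY.sqrt with hAdef
  set B := hZZ.sqrt with hBdef
  have hA : A.PosSemidef := hYY.posSemidef_sqrt
  have hB : B.PosSemidef := hZZ.posSemidef_sqrt
  have hAt : Aᵀ = A := by rw [← star_eq_transpose' A]; exact hA.1
  have hBt : Bᵀ = B := by rw [← star_eq_transpose' B]; exact hB.1
  have hAA : A * A = Y * Yᵀ := hYY.sqrt_mul_self
  have hBB : B * B = Z₁ * Z₁ᵀ := hZZ.sqrt_mul_self
  rw [frobNorm_eq_sqrt_trace, frobNorm_eq_sqrt_trace]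
  apply Real.sqrt_le_sqrt
  have key : (A * B).trace ≤ (Yᵀ * Z₁).trace := trace_sqrt_mul_sqrt_le Y Z₁ hYZ hZZ hYY
  have hZY : (Z₁ᵀ * Y).trace = (Yᵀ * Z₁).trace := by
    rw [← Matrix.trace_transpose (Z₁ᵀ * Y), Matrix.transpose_mul, Matrix.transpose_transpose]
  have hBA : (B * A).trace = (A * B).trace := Matrix.trace_mul_comm B A
  have hZZ' : (Z₁ᵀ * Z₁).trace = (Z₁ * Z₁ᵀ).trace := Matrix.trace_mul_comm Z₁ᵀ Z₁
  have hYY' : (Yᵀ * Y).trace = (Y * Yᵀ).trace := Matrix.trace_mul_comm Yᵀ Y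
  have lhs : ((Z₁ - Y)ᵀ * (Z₁ - Y)).trace
      = (Z₁ * Z₁ᵀ).trace + (Y * Yᵀ).trace - 2 * (Yᵀ * Z₁).trace := by
    rw [Matrix.transpose_sub, Matrix.sub_mul, Matrix.mul_sub, Matrix.mul_sub,
      Matrix.trace_sub, Matrix.trace_sub, Matrix.trace_sub, hZY, hZZ', hYY']
    ring
  have rhs : ((B - A)ᵀ * (B - A)).trace
      = (Z₁ * Z₁ᵀ).trace + (Y * Yᵀ).trace - 2 * (A * B).trace := by
    rw [Matrix.transpose_sub, hAt, hBt, Matrix.sub_mul, Matrix.mul_sub, Matrix.mul_sub,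
      Matrix.trace_sub, Matrix.trace_sub, Matrix.trace_sub, hBA, hBB, hAA]
    ring
  rw [lhs, rhs]
  linarith
end

section
/- Let S, Σ ∈ ℝ^{r×r} be symmetric positive semidefinite with Σ diagonal and smallest diagonal entry σ > 0. Then ‖S − Σ‖_F ≤ (1/σ) ‖S² − Σ²‖_F. -/
open Matrix BigOperators

/-- If `S, Σ` are symmetric positive semidefinite, `Σ = diagonal d` with all
diagonal entries at least `σ > 0`, then `‖S − Σ‖_F ≤ (1/σ)‖S² − Σ²‖_F`. -/
theorem sqrt_perturbation_bound {r : ℕ} (S : Matrix (Fin r) (Fin r) ℝ)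
    (d : Fin r → ℝ) (σ : ℝ) (hσ : 0 < σ) (hd : ∀ i, σ ≤ d i)
    (hS : S.PosSemidef) (hSig : (Matrix.diagonal d).PosSemidef) :
    frobNorm (S - Matrix.diagonal d) ≤
      (1 / σ) * frobNorm (S * S - Matrix.diagonal d * Matrix.diagonal d) := by
  set D := Matrix.diagonal d with hD
  set M := S - D with hM
  set E := S * S - D * D with hE
  -- E = S * M + M * D
  have hEdec : E = S * M + M * D := by
    rw [hM, hE]
    simp [Matrix.mul_sub, Matrix.sub_mul]
  -- inner product term 1 : ⟪M, S*M⟫ ≥ 0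
  have h1 : (0:ℝ) ≤ ∑ i, ∑ j, M i j * (S * M) i j := by
    rw [Finset.sum_comm]
    apply Finset.sum_nonneg
    intro j _
    have := hS.dotProduct_mulVec_nonneg (fun i => M i j)
    simp only [star_trivial, dotProduct, Matrix.mulVec, Matrix.mul_apply] at this ⊢
    convert this using 1
  -- inner product term 2 : ⟪M, M*D⟫ ≥ σ * ∑ M²
  have h2 : σ * (∑ i, ∑ j, M i j ^ 2) ≤ ∑ i, ∑ j, M i j * (M * D) i j := by
    rw [Finset.mul_sum]
    apply Finset.sum_le_sum
    intro i _
    rw [Finset.mul_sum]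
    apply Finset.sum_le_sum
    intro j _
    rw [hD, Matrix.mul_diagonal]
    have hsq : (0:ℝ) ≤ M i j ^ 2 := sq_nonneg _
    calc σ * M i j ^ 2 ≤ d j * M i j ^ 2 :=
          mul_le_mul_of_nonneg_right (hd j) hsq
      _ = M i j * (M i j * d j) := by ring
  -- key inequality
  have hkey : σ * (∑ i, ∑ j, M i j ^ 2) ≤ ∑ i, ∑ j, M i j * E i j := by
    have : ∑ i, ∑ j, M i j * E i j
        = (∑ i, ∑ j, M i j * (S * M) i j) + ∑ i, ∑ j, M i j * (M * D) i j := by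
      rw [hEdec]
      rw [← Finset.sum_add_distrib]
      apply Finset.sum_congr rfl
      intro i _
      rw [← Finset.sum_add_distrib]
      apply Finset.sum_congr rfl
      intro j _
      simp [Matrix.add_apply, mul_add]
    rw [this]
    linarith
  -- Cauchy-Schwarz
  have hCS : ∑ i, ∑ j, M i j * E i j ≤ frobNorm M * frobNorm E := by
    unfold frobNorm
    rw [← Finset.sum_product', ← Finset.sum_product', ← Finset.sum_product',
      Finset.univ_product_univ]
    exact Real.sum_mul_le_sqrt_mul_sqrt _ _ _
  have hMnn : (0:ℝ) ≤ ∑ i, ∑ j, M i j ^ 2 :=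
    Finset.sum_nonneg fun i _ => Finset.sum_nonneg fun j _ => sq_nonneg _
  have hfM : frobNorm M ^ 2 = ∑ i, ∑ j, M i j ^ 2 := Real.sq_sqrt hMnn
  have hfMnn : 0 ≤ frobNorm M := Real.sqrt_nonneg _
  have hfEnn : 0 ≤ frobNorm E := Real.sqrt_nonneg _
  have hmain : σ * frobNorm M ^ 2 ≤ frobNorm M * frobNorm E := by
    rw [hfM]; exact le_trans hkey hCS
  rcases eq_or_lt_of_le hfMnn with h0 | h0
  · rw [← h0]
    positivity
  · rw [div_mul_eq_mul_div, le_div_iff₀ hσ, one_mul]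
    nlinarith [hmain, h0]
end

section
/- Let X = Y Yᵀ with Y ∈ ℝ^{n×r} of full column rank, let P = Y Y⁺ be the orthogonal projector onto the column space of Y, and let X̃ be any symmetric positive semidefinite matrix of rank at most r. Then trace((I − P) X̃ (I − P)) ≤ √r · ‖X̃ − X‖_F. -/
open Matrix BigOperators

section Aux
variable {m : ℕ} {M : Matrix (Fin m) (Fin m) ℝ}

lemma aux_trace_eq_sum_eigenvalues (hM : M.IsHermitian) :
    M.trace = ∑ i, hM.eigenvalues i := by
  conv_lhs => rw [hM.spectral_theorem, Unitary.conjStarAlgAut_apply]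
  rw [Matrix.trace_mul_cycle, Unitary.coe_star_mul_self, one_mul]
  simp [Matrix.trace, Matrix.diag]

lemma aux_trace_sq_eq_sum_sq (hM : M.IsHermitian) :
    (M * M).trace = ∑ i, hM.eigenvalues i ^ 2 := by
  set U : Matrix (Fin m) (Fin m) ℝ := (hM.eigenvectorUnitary : Matrix (Fin m) (Fin m) ℝ) with hU
  set D : Matrix (Fin m) (Fin m) ℝ :=
    Matrix.diagonal (RCLike.ofReal ∘ hM.eigenvalues) with hD
  have hsU : star U * U = 1 := Unitary.coe_star_mul_self hM.eigenvectorUnitary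
  have h1 : M * M = U * (D * D) * star U := by
    conv_lhs => rw [hM.spectral_theorem, Unitary.conjStarAlgAut_apply]
    rw [← hU, ← hD]
    calc U * D * star U * (U * D * star U)
        = U * D * (star U * U) * D * star U := by
          simp only [Matrix.mul_assoc]
      _ = U * (D * D) * star U := by rw [hsU]; simp only [Matrix.mul_assoc, Matrix.one_mul]
  rw [h1, Matrix.trace_mul_cycle, hsU, one_mul, hD]
  simp [Matrix.diagonal_mul_diagonal, Matrix.trace, Matrix.diag, pow_two]

lemma aux_isUnit_of_rank_eq {r : ℕ} (B : Matrix (Fin r) (Fin r) ℝ) (h : B.rank = r) :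
    IsUnit B := by
  rw [← Matrix.mulVec_surjective_iff_isUnit]
  have htop : LinearMap.range B.mulVecLin = ⊤ := by
    apply Submodule.eq_top_of_finrank_eq
    rw [show Module.finrank ℝ ↥(LinearMap.range B.mulVecLin) = B.rank from rfl, h,
      Module.finrank_fintype_fun_eq_card, Fintype.card_fin]
  intro y
  obtain ⟨x, hx⟩ := LinearMap.range_eq_top.mp htop y
  exact ⟨x, by simpa using hx⟩

end Aux


/-- Let `X = Y Yᵀ` with `Y` of full column rank, `P = Y (YᵀY)⁻¹ Yᵀ` the orthogonal
projector onto the column space of `Y`, and `X̃ ⪰ 0` of rank at most `r`.  Then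
`trace((I − P) X̃ (I − P)) ≤ √r ‖X̃ − X‖_F`. -/
theorem complement_projection_trace_bound {n r : ℕ}
    (Y : Matrix (Fin n) (Fin r) ℝ) (Xt P : Matrix (Fin n) (Fin n) ℝ)
    (hrank : Y.rank = r) (hP : P = Y * (Yᵀ * Y)⁻¹ * Yᵀ)
    (hXt : Xt.PosSemidef) (hXtrank : Xt.rank ≤ r) :
    Matrix.trace ((1 - P) * Xt * (1 - P)) ≤
      Real.sqrt r * frobNorm (Xt - Y * Yᵀ) := by
  classical
  -- invertibility of YᵀY
  have hunit : IsUnit (Yᵀ * Y) :=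
    aux_isUnit_of_rank_eq _ (by rw [Y.rank_transpose_mul_self, hrank])
  have hdet : IsUnit (Yᵀ * Y).det := (Matrix.isUnit_iff_isUnit_det _).mp hunit
  have hinv1 : (Yᵀ * Y)⁻¹ * (Yᵀ * Y) = 1 := Matrix.nonsing_inv_mul _ hdet
  have hinv2 : (Yᵀ * Y) * (Yᵀ * Y)⁻¹ = 1 := Matrix.mul_nonsing_inv _ hdet
  have hPY : P * Y = Y := by
    rw [hP, Matrix.mul_assoc (Y * (Yᵀ * Y)⁻¹) Yᵀ Y, Matrix.mul_assoc, hinv1, Matrix.mul_one]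
  have hYtP : Yᵀ * P = Yᵀ := by
    rw [hP, ← Matrix.mul_assoc, ← Matrix.mul_assoc, hinv2, Matrix.one_mul]
  set Q : Matrix (Fin n) (Fin n) ℝ := 1 - P with hQ
  have hQY : Q * Y = 0 := by rw [hQ, Matrix.sub_mul, Matrix.one_mul, hPY, sub_self]
  have hYtQ : Yᵀ * Q = 0 := by rw [hQ, Matrix.mul_sub, Matrix.mul_one, hYtP, sub_self]
  have hPP : P * P = P := by
    nth_rewrite 1 [hP]
    rw [Matrix.mul_assoc (Y * (Yᵀ * Y)⁻¹) Yᵀ P, hYtP, ← hP]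
  have hQQ : Q * Q = Q := by
    rw [hQ, Matrix.mul_sub, Matrix.mul_one, Matrix.sub_mul, Matrix.one_mul, hPP,
      sub_self, sub_zero]
  have hPsym : Pᵀ = P := by
    rw [hP, Matrix.transpose_mul, Matrix.transpose_mul, Matrix.transpose_transpose,
      Matrix.transpose_nonsing_inv, Matrix.transpose_mul, Matrix.transpose_transpose,
      Matrix.mul_assoc]
  have hQsym : Qᵀ = Q := by rw [hQ, Matrix.transpose_sub, Matrix.transpose_one, hPsym]
  set A : Matrix (Fin n) (Fin n) ℝ := Xt - Y * Yᵀ with hA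
  have hXtsym : Xtᵀ = Xt := by
    simpa [Matrix.conjTranspose_eq_transpose_of_trivial] using hXt.1.eq
  have hAsym : Aᵀ = A := by
    rw [hA, Matrix.transpose_sub, hXtsym, Matrix.transpose_mul, Matrix.transpose_transpose]
  set M : Matrix (Fin n) (Fin n) ℝ := Q * Xt * Q with hM
  have hQXtA : Q * A = Q * Xt := by
    rw [hA, Matrix.mul_sub, ← Matrix.mul_assoc, hQY, Matrix.zero_mul, sub_zero]
  have hMA : M = Q * A * Q := by rw [hM, hQXtA]
  have hMpsd : M.PosSemidef := by
    have h := hXt.mul_mul_conjTranspose_same Q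
    rwa [Matrix.conjTranspose_eq_transpose_of_trivial, hQsym] at h
  have hMsym : Mᵀ = M := by
    simpa [Matrix.conjTranspose_eq_transpose_of_trivial] using hMpsd.1.eq
  have hMrank : M.rank ≤ r :=
    le_trans (le_trans (Matrix.rank_mul_le_left (Q * Xt) Q)
      (Matrix.rank_mul_le_right Q Xt)) hXtrank
  have hH := hMpsd.1
  set lam := hH.eigenvalues with hlam
  have hlam0 : ∀ i, 0 ≤ lam i := hMpsd.eigenvalues_nonneg
  have ht : M.trace = ∑ i, lam i := aux_trace_eq_sum_eigenvalues hH
  have hs : (M * M).trace = ∑ i, lam i ^ 2 := aux_trace_sq_eq_sum_sq hH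
  have hcard : (Finset.univ.filter (fun i => lam i ≠ 0)).card = M.rank := by
    rw [hH.rank_eq_card_non_zero_eigs, Fintype.card_subtype]
  have hCS1 : (∑ i, lam i) ^ 2 ≤ (M.rank : ℝ) * ∑ i, lam i ^ 2 := by
    have h := Finset.sum_mul_sq_le_sq_mul_sq Finset.univ
      (fun i => if lam i ≠ 0 then (1:ℝ) else 0) lam
    have h1 : ∑ i, (if lam i ≠ 0 then (1:ℝ) else 0) * lam i = ∑ i, lam i := by
      refine Finset.sum_congr rfl fun i _ => ?_
      by_cases hi : lam i = 0 <;> simp [hi]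
    have h2 : ∑ i, (if lam i ≠ 0 then (1:ℝ) else 0) ^ 2
        = ((Finset.univ.filter (fun i => lam i ≠ 0)).card : ℝ) := by
      have he : ∀ i : Fin n, (if lam i ≠ 0 then (1:ℝ) else 0) ^ 2
          = if lam i ≠ 0 then (1:ℝ) else 0 := fun i => by
        by_cases hi : lam i = 0 <;> simp [hi]
      simp only [he]
      rw [Finset.sum_boole]
    rw [h1, h2, hcard] at h
    exact h
  have htnn : 0 ≤ ∑ i, lam i := Finset.sum_nonneg fun i _ => hlam0 i
  have hsq : (∑ i, lam i) ^ 2 ≤ (r : ℝ) * ∑ i, lam i ^ 2 := by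
    refine hCS1.trans (mul_le_mul_of_nonneg_right ?_ ?_)
    · exact_mod_cast hMrank
    · positivity
  have hstep1 : M.trace ≤ Real.sqrt r * Real.sqrt (∑ i, lam i ^ 2) := by
    rw [ht]
    calc ∑ i, lam i = Real.sqrt ((∑ i, lam i) ^ 2) := (Real.sqrt_sq htnn).symm
      _ ≤ Real.sqrt ((r : ℝ) * ∑ i, lam i ^ 2) := Real.sqrt_le_sqrt hsq
      _ = Real.sqrt r * Real.sqrt (∑ i, lam i ^ 2) := Real.sqrt_mul (by positivity) _
  have hMQ : M * Q = M := by rw [hM, Matrix.mul_assoc (Q * Xt) Q Q, hQQ]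
  have hQM : Q * M = M := by
    rw [hM, ← Matrix.mul_assoc Q (Q * Xt) Q, ← Matrix.mul_assoc Q Q Xt, hQQ]
  have key : M * M = Q * (A * M) := by
    nth_rewrite 1 [hMA]
    rw [Matrix.mul_assoc (Q * A) Q M, hQM, Matrix.mul_assoc]
  have htrace_entries : (M * M).trace = (A * M).trace := by
    rw [key, Matrix.trace_mul_comm, Matrix.mul_assoc, hMQ]
  have hMs : ∀ i j, M j i = M i j := by
    intro i j
    rw [← Matrix.transpose_apply M i j, hMsym]
  have hAM : (A * M).trace = ∑ i, ∑ j, A i j * M i j := by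
    simp only [Matrix.trace, Matrix.diag, Matrix.mul_apply]
    exact Finset.sum_congr rfl fun i _ => Finset.sum_congr rfl fun j _ => by rw [hMs i j]
  have hMMsum : (M * M).trace = ∑ i, ∑ j, M i j ^ 2 := by
    simp only [Matrix.trace, Matrix.diag, Matrix.mul_apply]
    exact Finset.sum_congr rfl fun i _ => Finset.sum_congr rfl fun j _ => by
      rw [hMs i j, pow_two]
  set sA := ∑ i, ∑ j, A i j ^ 2 with hsA
  set sM := ∑ i, ∑ j, M i j ^ 2 with hsM
  have hsMnn : 0 ≤ sM := by
    rw [hsM]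
    exact Finset.sum_nonneg fun i _ => Finset.sum_nonneg fun j _ => sq_nonneg _
  have hsAnn : 0 ≤ sA := by
    rw [hsA]
    exact Finset.sum_nonneg fun i _ => Finset.sum_nonneg fun j _ => sq_nonneg _
  have hMeqAM : sM = ∑ i, ∑ j, A i j * M i j := by rw [← hMMsum, htrace_entries, hAM]
  have hCS2 : (∑ i, ∑ j, A i j * M i j) ^ 2 ≤ sA * sM := by
    have h := Finset.sum_mul_sq_le_sq_mul_sq Finset.univ
      (fun p : Fin n × Fin n => A p.1 p.2) (fun p : Fin n × Fin n => M p.1 p.2)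
    simpa [Fintype.sum_prod_type] using h
  rw [← hMeqAM] at hCS2
  have hsM_le : sM ≤ sA := by nlinarith [hsMnn, hsAnn, hCS2]
  have hfrob : frobNorm (Xt - Y * Yᵀ) = Real.sqrt sA := by
    rw [frobNorm, hsA, hA]
  calc M.trace ≤ Real.sqrt r * Real.sqrt (∑ i, lam i ^ 2) := hstep1
    _ = Real.sqrt r * Real.sqrt sM := by rw [← hs, hMMsum]
    _ ≤ Real.sqrt r * Real.sqrt sA :=
        mul_le_mul_of_nonneg_left (Real.sqrt_le_sqrt hsM_le) (Real.sqrt_nonneg _)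
    _ = Real.sqrt r * frobNorm (Xt - Y * Yᵀ) := by rw [hfrob]
end
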